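/- arXiv:1810.09070 — 5 statements merged into one kernel-verified Lean document; each statement's English description precedes it below -/
import Mathlib

section
/- Fix α ∈ (0,1), ε ∈ (0,1], and a probability vector p = (p_i)_{i≥1} on the positive integers with p_1 ≥ p_2 ≥ p_3 ≥ ⋯. Let i* be the least integer such that ∑_{i=1}^{i*} p_i ≥ 1−ε, and define q*_i = p_i for i < i*, q*_{i*} = 1 − ε − ∑_{i<i*} p_i, and q*_i = 0 for i > i*. Then ∑_{i=1}^∞ (q*_i)^α = inf { ∑_{i=1}^∞ q_i^α : 0 ≤ q_i ≤ p_i for all i, ∑_i q_i ≥ 1−ε }. -/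
/-!
For `0 < α < 1`, `x ^ α` is a fixed positive multiple of `∫₀^∞ min x u * u ^ (α - 2) du`, so it
suffices to show that for every cap `u > 0` the capped mass `∑ min qᵢ u` of a competitor `q` is at
least that of `q*`. Let `B = {i | u ≤ qᵢ}`. If `i* ≤ |B|`, the capped mass of `q` is at least
`i* u`, which bounds that of `q*`. Otherwise capping removes `∑_{i ∈ B} (qᵢ - u)` from `q`, which is at
most `∑_{i < |B|} pᵢ - |B| u` because `p` dominates `q` and is nonincreasing; capping removes at
least that much from `q*`, whose first `|B|` entries are those of `p`, and `q` has at least the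
mass of `q*`.
-/

open MeasureTheory

section

open Set

theorem lintegral_Ioc_zero_rpow {β x : ℝ} (hβ : -1 < β) (hx : 0 ≤ x) :
    ∫⁻ u in Ioc 0 x, ENNReal.ofReal (u ^ β) = ENNReal.ofReal (x ^ (β + 1) / (β + 1)) := by
  have hint : IntegrableOn (fun u : ℝ => u ^ β) (Ioc 0 x) :=
    (intervalIntegrable_iff_integrableOn_Ioc_of_le hx).mp
      (intervalIntegral.intervalIntegrable_rpow' hβ)
  rw [← ofReal_integral_eq_lintegral_ofReal hint
    (ae_restrict_of_forall_mem measurableSet_Ioc fun u hu => Real.rpow_nonneg hu.1.le _),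
    ← intervalIntegral.integral_of_le hx, integral_rpow (Or.inl hβ),
    Real.zero_rpow (by linarith), sub_zero]

theorem lintegral_Ioi_rpow {β x : ℝ} (hβ : β < -1) (hx : 0 < x) :
    ∫⁻ u in Ioi x, ENNReal.ofReal (u ^ β) = ENNReal.ofReal (x ^ (β + 1) / -(β + 1)) := by
  rw [← ofReal_integral_eq_lintegral_ofReal (integrableOn_Ioi_rpow_of_lt hβ hx)
    (ae_restrict_of_forall_mem measurableSet_Ioi fun u hu =>
      Real.rpow_nonneg (hx.trans hu).le _), integral_Ioi_rpow_of_lt hβ hx, div_neg, neg_div]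

theorem lintegral_min_mul_rpow {α x : ℝ} (hα0 : 0 < α) (hα1 : α < 1) (hx : 0 ≤ x) :
    ∫⁻ u in Ioi 0, ENNReal.ofReal (min x u) * ENNReal.ofReal (u ^ (α - 2)) =
      ENNReal.ofReal (x ^ α) * ENNReal.ofReal (α⁻¹ + (1 - α)⁻¹) := by
  rcases hx.eq_or_lt with rfl | hx
  · rw [Real.zero_rpow hα0.ne', ENNReal.ofReal_zero, zero_mul]
    refine (setLIntegral_congr_fun measurableSet_Ioi fun u hu => ?_).trans lintegral_zero
    rw [min_eq_left hu.le, ENNReal.ofReal_zero, zero_mul]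
  have hIoc : ∀ u ∈ Ioc 0 x, ENNReal.ofReal (min x u) * ENNReal.ofReal (u ^ (α - 2)) =
      ENNReal.ofReal (u ^ (α - 1)) := fun u hu => by
    rw [min_eq_right hu.2, ← ENNReal.ofReal_mul hu.1.le, ← Real.rpow_one_add' hu.1.le (by linarith)]
    ring_nf
  have hIoi : ∀ u ∈ Ioi x, ENNReal.ofReal (min x u) * ENNReal.ofReal (u ^ (α - 2)) =
      ENNReal.ofReal x * ENNReal.ofReal (u ^ (α - 2)) := fun u hu => by
    rw [min_eq_left hu.le]
  have hxα : x * x ^ (α - 1) = x ^ α := by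
    rw [Real.rpow_sub_one hx.ne', mul_div_cancel₀ _ hx.ne']
  rw [← Ioc_union_Ioi_eq_Ioi hx.le, lintegral_union measurableSet_Ioi (Ioc_disjoint_Ioi le_rfl),
    setLIntegral_congr_fun measurableSet_Ioc hIoc, setLIntegral_congr_fun measurableSet_Ioi hIoi,
    lintegral_const_mul _ (by fun_prop), lintegral_Ioc_zero_rpow (by linarith) hx.le,
    lintegral_Ioi_rpow (by linarith) hx, ← ENNReal.ofReal_mul hx.le, sub_add_cancel,
    show α - 2 + 1 = α - 1 by ring, ← mul_div_assoc, hxα,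
    ← ENNReal.ofReal_add (by positivity) (div_nonneg (by positivity) (by linarith)),
    ← ENNReal.ofReal_mul (by positivity)]
  congr 1
  ring

theorem tsum_ofReal_rpow_le_of_tsum_ofReal_min_le {ι : Type*} [Countable ι] {α : ℝ}
    (hα0 : 0 < α) (hα1 : α < 1) {r q : ι → ℝ} (hr : ∀ i, 0 ≤ r i) (hq : ∀ i, 0 ≤ q i)
    (h : ∀ u, 0 < u → ∑' i, ENNReal.ofReal (min (r i) u) ≤ ∑' i, ENNReal.ofReal (min (q i) u)) :
    ∑' i, ENNReal.ofReal (r i ^ α) ≤ ∑' i, ENNReal.ofReal (q i ^ α) := by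
  have hK : 0 < α⁻¹ + (1 - α)⁻¹ := add_pos (inv_pos.2 hα0) (inv_pos.2 (sub_pos.2 hα1))
  have layer_cake : ∀ s : ι → ℝ, (∀ i, 0 ≤ s i) →
      (∑' i, ENNReal.ofReal (s i ^ α)) * ENNReal.ofReal (α⁻¹ + (1 - α)⁻¹) =
        ∫⁻ u in Ioi 0, (∑' i, ENNReal.ofReal (min (s i) u)) * ENNReal.ofReal (u ^ (α - 2)) := by
    intro s hs
    simp_rw [ENNReal.tsum_mul_right.symm, ← lintegral_min_mul_rpow hα0 hα1 (hs _)]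
    exact (lintegral_tsum fun i => by fun_prop).symm
  rw [← ENNReal.mul_le_mul_iff_left (ENNReal.ofReal_pos.2 hK).ne' ENNReal.ofReal_ne_top,
    layer_cake r hr, layer_cake q hq]
  exact setLIntegral_mono' measurableSet_Ioi fun u hu => mul_le_mul_left (h u hu) _

end

open Finset

theorem Antitone.sum_le_sum_range_card {M : Type*} [AddCommMonoid M] [PartialOrder M]
    [IsOrderedAddMonoid M] {f : ℕ → M} (hf : Antitone f) (s : Finset ℕ) :
    ∑ i ∈ s, f i ≤ ∑ i ∈ range #s, f i := by
  induction s using Finset.induction_on_max with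
  | empty => simp
  | insert a s hlt ih =>
    have ha : a ∉ s := fun h => (hlt a h).false
    have hcard : #s ≤ a := by simpa using Finset.card_le_card fun i hi => mem_range.2 (hlt i hi)
    rw [sum_insert ha, card_insert_of_notMem ha, sum_range_succ, add_comm]
    exact add_le_add ih (hf hcard)

theorem sum_range_min_le_tsum_min {p q r : ℕ → ℝ} {m : ℕ} {u : ℝ} (hp : Antitone p)
    (hqs : Summable q) (hq0 : ∀ i, 0 ≤ q i) (hqp : ∀ i, q i ≤ p i)
    (hrp : ∀ i, i + 1 < m → r i = p i) (hmass : ∑ i ∈ range m, r i ≤ ∑' i, q i) (hu : 0 < u) :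
    ∑ i ∈ range m, min (r i) u ≤ ∑' i, min (q i) u := by
  have hmin0 : ∀ i, 0 ≤ min (q i) u := fun i => le_min (hq0 i) hu.le
  have hmins : Summable fun i => min (q i) u :=
    hqs.of_nonneg_of_le hmin0 fun i => min_le_left _ _
  have hfin : {i | ¬ q i < u}.Finite :=
    Filter.eventually_cofinite.1 (hqs.tendsto_cofinite_zero.eventually_lt_const hu)
  set B := hfin.toFinset
  have hB : ∀ i, i ∈ B ↔ u ≤ q i := fun i => by simp [B]
  rcases lt_or_ge #B m with hBm | hmB
  · have hexcess : ∑' i, q i - ∑' i, min (q i) u = ∑ i ∈ B, q i - #B * u := by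
      rw [← hqs.tsum_sub hmins, ← nsmul_eq_mul, ← sum_const, ← sum_sub_distrib,
        tsum_eq_sum fun i hi => by rw [min_eq_left (not_le.1 (mt (hB i).2 hi)).le, sub_self]]
      exact sum_congr rfl fun i hi => by rw [min_eq_right ((hB i).1 hi)]
    have hBp : ∑ i ∈ B, q i ≤ ∑ i ∈ range #B, r i := by
      rw [sum_congr rfl fun i hi => hrp i (by rw [mem_range] at hi; omega)]
      exact (sum_le_sum fun i _ => hqp i).trans (hp.sum_le_sum_range_card B)
    rw [← sum_range_add_sum_Ico _ hBm.le] at hmass ⊢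
    have hhead : ∑ i ∈ range #B, min (r i) u ≤ #B * u := by
      simpa using sum_le_card_nsmul (range #B) _ _ fun i _ => min_le_right (r i) u
    have htail := sum_le_sum fun i (_ : i ∈ Ico #B m) => min_le_left (r i) u
    linarith
  · calc ∑ i ∈ range m, min (r i) u ≤ #B * u := by
          have := sum_le_card_nsmul (range m) _ _ fun i _ => min_le_right (r i) u
          simp only [card_range, nsmul_eq_mul] at this
          exact this.trans (by gcongr)
      _ = ∑ i ∈ B, min (q i) u := by
          rw [sum_congr rfl fun i hi => min_eq_right ((hB i).1 hi)]; simp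
      _ ≤ ∑' i, min (q i) u := hmins.sum_le_tsum B fun i _ => hmin0 i

theorem tsum_ofReal_min_le_tsum_ofReal_min {p q r : ℕ → ℝ} {m : ℕ} {u : ℝ} (hp : Antitone p)
    (hqs : Summable q) (hq0 : ∀ i, 0 ≤ q i) (hqp : ∀ i, q i ≤ p i) (hr0 : ∀ i, 0 ≤ r i)
    (hrp : ∀ i, i + 1 < m → r i = p i) (hr : ∀ i ∉ range m, r i = 0)
    (hmass : ∑ i ∈ range m, r i ≤ ∑' i, q i) (hu : 0 < u) :
    ∑' i, ENNReal.ofReal (min (r i) u) ≤ ∑' i, ENNReal.ofReal (min (q i) u) := by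
  have hmin0 : ∀ x, 0 ≤ x → 0 ≤ min x u := fun x hx => le_min hx hu.le
  rw [tsum_eq_sum fun i hi => by rw [hr i hi, min_eq_left hu.le, ENNReal.ofReal_zero],
    ← ENNReal.ofReal_sum_of_nonneg fun i _ => hmin0 _ (hr0 i),
    ← ENNReal.ofReal_tsum_of_nonneg (fun i => hmin0 _ (hq0 i))
      (hqs.of_nonneg_of_le (fun i => hmin0 _ (hq0 i)) fun i => min_le_left _ _)]
  exact ENNReal.ofReal_le_ofReal (sum_range_min_le_tsum_min hp hqs hq0 hqp hrp hmass hu)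

open scoped ENNReal

theorem truncation_attains_inf_general (α : ℝ) (hα : α ∈ Set.Ioo (0:ℝ) 1)
    (ε : ℝ) (hε : ε ∈ Set.Ioc (0:ℝ) 1)
    (p : ℕ → ℝ) (hp0 : ∀ i, 0 ≤ p i) (hpmono : ∀ i, p (i + 1) ≤ p i)
    (hpsum : Summable p)
    (istar : ℕ)
    (histar : 1 - ε ≤ ∑ i ∈ Finset.range istar, p i)
    (hmin : ∀ m, m < istar → ∑ i ∈ Finset.range m, p i < 1 - ε)
    (qstar : ℕ → ℝ)
    (hqstar : ∀ i, qstar i =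
      if i + 1 < istar then p i
      else if i + 1 = istar then 1 - ε - ∑ j ∈ Finset.range (istar - 1), p j
      else 0) :
    (∑' i, ENNReal.ofReal (qstar i ^ α)) =
      sInf { S : ℝ≥0∞ | ∃ q : ℕ → ℝ, (∀ i, 0 ≤ q i ∧ q i ≤ p i) ∧
        1 - ε ≤ ∑' i, q i ∧ S = ∑' i, ENNReal.ofReal (q i ^ α) } := by
  obtain ⟨hα0, hα1⟩ := hα
  have hsupp : ∀ i ∉ range istar, qstar i = 0 := fun i hi => by
    rw [mem_range, not_lt] at hi
    rw [hqstar, if_neg (by omega), if_neg (by omega)]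
  have hfeas : ∀ i, 0 ≤ qstar i ∧ qstar i ≤ p i := fun i => by
    rw [hqstar]
    split_ifs with hlt heq
    · exact ⟨hp0 i, le_rfl⟩
    · subst heq
      rw [sum_range_succ] at histar
      rw [Nat.add_sub_cancel]
      exact ⟨by linarith [hmin i (by omega)], by linarith⟩
    · exact ⟨le_rfl, hp0 i⟩
  have hmass : ∑ i ∈ range istar, qstar i = 1 - ε := by
    cases istar with
    | zero => simp only [range_zero, sum_empty] at histar ⊢; linarith [hε.2]
    | succ n =>
      rw [sum_range_succ, hqstar n, if_neg (by omega), if_pos rfl,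
        sum_congr rfl fun i hi => by rw [hqstar i, if_pos (by simpa using hi)]]
      simp
  refine le_antisymm (le_sInf ?_) (sInf_le ⟨qstar, hfeas, ?_, rfl⟩)
  · rintro _ ⟨q, hq, hqmass, rfl⟩
    have hqs : Summable q := hpsum.of_nonneg_of_le (fun i => (hq i).1) fun i => (hq i).2
    exact tsum_ofReal_rpow_le_of_tsum_ofReal_min_le hα0 hα1 (fun i => (hfeas i).1)
      (fun i => (hq i).1) fun u hu => tsum_ofReal_min_le_tsum_ofReal_min
        (antitone_nat_of_succ_le hpmono) hqs (fun i => (hq i).1) (fun i => (hq i).2)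
        (fun i => (hfeas i).1) (fun i hi => by rw [hqstar, if_pos hi]) hsupp (hmass ▸ hqmass) hu
  · rw [tsum_eq_sum hsupp, hmass]

/-- The greedy truncation of a nonincreasing probability vector attains the infimum
of the α-power sum among all subdistributions dominated by `p` with mass `≥ 1 - ε`.
(Sums of α-powers are computed in `ℝ≥0∞` so that they always exist.) -/
theorem truncation_attains_inf (α : ℝ) (hα : α ∈ Set.Ioo (0:ℝ) 1)
    (ε : ℝ) (hε : ε ∈ Set.Ioc (0:ℝ) 1)
    (p : ℕ → ℝ) (hp0 : ∀ i, 0 ≤ p i) (hpmono : ∀ i, p (i + 1) ≤ p i)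
    (hpsum : Summable p) (hp1 : ∑' i, p i = 1)
    (istar : ℕ)
    (histar : 1 - ε ≤ ∑ i ∈ Finset.range istar, p i)
    (hmin : ∀ m, m < istar → ∑ i ∈ Finset.range m, p i < 1 - ε)
    (qstar : ℕ → ℝ)
    (hqstar : ∀ i, qstar i =
      if i + 1 < istar then p i
      else if i + 1 = istar then 1 - ε - ∑ j ∈ Finset.range (istar - 1), p j
      else 0) :
    (∑' i, ENNReal.ofReal (qstar i ^ α)) =
      sInf { S : ℝ≥0∞ | ∃ q : ℕ → ℝ, (∀ i, 0 ≤ q i ∧ q i ≤ p i) ∧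
        1 - ε ≤ ∑' i, q i ∧ S = ∑' i, ENNReal.ofReal (q i ^ α) } :=
  truncation_attains_inf_general α hα ε hε p hp0 hpmono hpsum istar histar hmin qstar hqstar
end

section
/- Let X be a random variable on a countable set 𝒳 with distribution P_X, let α ∈ (0,1) and ε ∈ [0,1). Suppose the values x^1, x^2, ... are ordered so that P_X(x^1) ≥ P_X(x^2) ≥ ⋯, and let i* be the least integer with ∑_{i=1}^{i*} P_X(x^i) ≥ 1−ε. Define Q*(x^i) = P_X(x^i) for i < i*, Q*(x^{i*}) = 1 − ε − ∑_{i<i*} P_X(x^i), and Q*(x^i) = 0 for i > i*. Then the ε-smooth Rényi entropy H_α^ε(X) := inf_{Q ∈ B^ε(P_X)} (1/(1−α)) log ∑_x Q(x)^α equals (1/(1−α)) log ∑_{i=1}^{i*} Q*(x^i)^α, where B^ε(P_X) is the set of nonnegative functions Q on 𝒳 with Q(x) ≤ P_X(x) for all x and ∑_x Q(x) ≥ 1−ε. -/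
/-!
For `α ∈ (0, 1)` the power `t ^ α` is a positive mixture of the hinge functions `t ↦ min t θ`:
`(α⁻¹ + (1 - α)⁻¹) * t ^ α = ∫ θ in (0, ∞), min t θ * θ ^ (α - 2)`. Hence it suffices to show
`∑ i, min (Q* i) θ ≤ ∑ x, min (Q x) θ` for every `θ > 0` and every admissible `Q`.

If exactly `k` values of `Q` exceed `θ`, the right side equals `k * θ` plus the mass of `Q` off
those `k` points, which is at least `1 - ε - min (1 - ε) (P x¹ + ⋯ + P xᵏ)` because `Q ≤ P` and
`P` is sorted. Capping the first `k` entries of `Q*` at `θ` bounds the left side by the same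
quantity, since `Q*` agrees with `P` before its last entry and has total mass `1 - ε`.
-/

section

open Set MeasureTheory ENNReal

theorem lintegral_Ioc_rpow_sub_one {α x : ℝ} (hα : 0 < α) (hx : 0 ≤ x) :
    ∫⁻ θ in Ioc 0 x, ENNReal.ofReal (θ ^ (α - 1)) = ENNReal.ofReal (x ^ α / α) := by
  have hint : IntegrableOn (fun θ : ℝ => θ ^ (α - 1)) (Ioc 0 x) :=
    (intervalIntegral.intervalIntegrable_rpow' (by linarith)).1
  rw [← ofReal_integral_eq_lintegral_ofReal hint
    ((ae_restrict_iff' measurableSet_Ioc).2 (ae_of_all _ fun θ hθ => Real.rpow_nonneg hθ.1.le _)),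
    ← intervalIntegral.integral_of_le hx, integral_rpow (Or.inl (by linarith))]
  simp [Real.zero_rpow hα.ne']

theorem lintegral_Ioi_rpow_sub_two {α x : ℝ} (hα : α < 1) (hx : 0 < x) :
    ∫⁻ θ in Ioi x, ENNReal.ofReal (θ ^ (α - 2)) = ENNReal.ofReal (x ^ (α - 1) / (1 - α)) := by
  rw [← ofReal_integral_eq_lintegral_ofReal (integrableOn_Ioi_rpow_of_lt (by linarith) hx)
    ((ae_restrict_iff' measurableSet_Ioi).2
      (ae_of_all _ fun θ hθ => Real.rpow_nonneg (hx.trans hθ).le _)),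
    integral_Ioi_rpow_of_lt (by linarith) hx, show α - 2 + 1 = α - 1 by ring, neg_div,
    ← div_neg, neg_sub]

theorem lintegral_Ioi_min_mul_rpow {α x : ℝ} (hα : α ∈ Ioo 0 1) (hx : 0 ≤ x) :
    ∫⁻ θ in Ioi 0, ENNReal.ofReal (min x θ) * ENNReal.ofReal (θ ^ (α - 2)) =
      ENNReal.ofReal (x ^ α) * ENNReal.ofReal (α⁻¹ + (1 - α)⁻¹) := by
  obtain ⟨hα0, hα1⟩ := hα
  rcases hx.eq_or_lt with rfl | hx
  · simp [ENNReal.ofReal_eq_zero.2 (min_le_left 0 _), Real.zero_rpow hα0.ne']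
  rw [← Ioc_union_Ioi_eq_Ioi hx.le, lintegral_union measurableSet_Ioi (Ioc_disjoint_Ioi le_rfl),
    setLIntegral_congr_fun measurableSet_Ioc (g := fun θ => ENNReal.ofReal (θ ^ (α - 1)))
      fun θ hθ => ?below,
    setLIntegral_congr_fun measurableSet_Ioi
      (g := fun θ => ENNReal.ofReal x * ENNReal.ofReal (θ ^ (α - 2))) fun θ hθ => ?above,
    lintegral_const_mul' _ _ ofReal_ne_top, lintegral_Ioc_rpow_sub_one hα0 hx.le,
    lintegral_Ioi_rpow_sub_two hα1 hx, ← ENNReal.ofReal_mul hx.le,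
    ← ENNReal.ofReal_add (by positivity)
      (mul_nonneg hx.le (div_nonneg (Real.rpow_nonneg hx.le _) (sub_pos.2 hα1).le)),
    ← ENNReal.ofReal_mul (by positivity)]
  case below =>
    rw [min_eq_right hθ.2, ← ENNReal.ofReal_mul hθ.1.le,
      ← Real.rpow_one_add' hθ.1.le (by linarith)]
    ring_nf
  case above => rw [min_eq_left (le_of_lt hθ)]
  congr 1
  rw [Real.rpow_sub_one hx.ne']
  field_simp

theorem tsum_ofReal_rpow_mul_eq_lintegral {ι : Type*} [Countable ι] {α : ℝ} (hα : α ∈ Ioo 0 1)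
    {a : ι → ℝ} (ha : ∀ i, 0 ≤ a i) :
    (∑' i, ENNReal.ofReal (a i ^ α)) * ENNReal.ofReal (α⁻¹ + (1 - α)⁻¹) =
      ∫⁻ θ in Ioi 0, (∑' i, ENNReal.ofReal (min (a i) θ)) * ENNReal.ofReal (θ ^ (α - 2)) := by
  simp_rw [← ENNReal.tsum_mul_right, ← lintegral_Ioi_min_mul_rpow hα (ha _)]
  exact (lintegral_tsum fun i => by fun_prop).symm

theorem tsum_ofReal_rpow_le_of_forall_tsum_ofReal_min_le {ι κ : Type*} [Countable ι] [Countable κ]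
    {α : ℝ} (hα : α ∈ Ioo 0 1) {a : ι → ℝ} {b : κ → ℝ} (ha : ∀ i, 0 ≤ a i) (hb : ∀ j, 0 ≤ b j)
    (h : ∀ θ > 0, ∑' i, ENNReal.ofReal (min (a i) θ) ≤ ∑' j, ENNReal.ofReal (min (b j) θ)) :
    ∑' i, ENNReal.ofReal (a i ^ α) ≤ ∑' j, ENNReal.ofReal (b j ^ α) := by
  have hC : ENNReal.ofReal (α⁻¹ + (1 - α)⁻¹) ≠ 0 := by
    have := hα.1; have := sub_pos.2 hα.2
    rw [ne_eq, ENNReal.ofReal_eq_zero, not_le]; positivity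
  refine (ENNReal.mul_le_mul_iff_left hC ofReal_ne_top).1 ?_
  rw [tsum_ofReal_rpow_mul_eq_lintegral hα ha, tsum_ofReal_rpow_mul_eq_lintegral hα hb]
  refine setLIntegral_mono' measurableSet_Ioi fun θ hθ => ?_
  gcongr
  exact h θ hθ

theorem tsum_rpow_le_of_forall_tsum_min_le {ι κ : Type*} [Countable ι] [Countable κ]
    {α : ℝ} (hα : α ∈ Ioo 0 1) {a : ι → ℝ} {b : κ → ℝ} (ha : ∀ i, 0 ≤ a i) (hb : ∀ j, 0 ≤ b j)
    (hsa : Summable a) (hsb : Summable b) (haα : Summable fun i => a i ^ α)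
    (hbα : Summable fun j => b j ^ α)
    (h : ∀ θ > 0, ∑' i, min (a i) θ ≤ ∑' j, min (b j) θ) :
    ∑' i, a i ^ α ≤ ∑' j, b j ^ α := by
  rw [← ENNReal.ofReal_le_ofReal_iff (tsum_nonneg fun j => Real.rpow_nonneg (hb j) α),
    ENNReal.ofReal_tsum_of_nonneg (fun i => Real.rpow_nonneg (ha i) α) haα,
    ENNReal.ofReal_tsum_of_nonneg (fun j => Real.rpow_nonneg (hb j) α) hbα]
  refine tsum_ofReal_rpow_le_of_forall_tsum_ofReal_min_le hα ha hb fun θ hθ => ?_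
  rw [← ENNReal.ofReal_tsum_of_nonneg (fun i => le_min (ha i) hθ.le)
      (hsa.of_nonneg_of_le (fun i => le_min (ha i) hθ.le) fun i => min_le_left _ _),
    ← ENNReal.ofReal_tsum_of_nonneg (fun j => le_min (hb j) hθ.le)
      (hsb.of_nonneg_of_le (fun j => le_min (hb j) hθ.le) fun j => min_le_left _ _)]
  exact ENNReal.ofReal_le_ofReal (h θ hθ)

end

open Finset

theorem Finset.sum_le_sum_range_card_of_antitone {M : Type*} [AddCommMonoid M] [PartialOrder M]
    [IsOrderedAddMonoid M] {p : ℕ → M} (hp : Antitone p) (s : Finset ℕ) :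
    ∑ i ∈ s, p i ≤ ∑ i ∈ range #s, p i := by
  induction s using Finset.induction_on_max with
  | empty => simp
  | insert a s ha ih =>
    have has : a ∉ s := fun h => (ha a h).false
    have hsa : #s ≤ a := by simpa using card_le_card (fun x hx => mem_range.2 (ha x hx))
    rw [sum_insert has, card_insert_of_notMem has, sum_range_succ, add_comm]
    exact add_le_add ih (hp hsa)

theorem tsum_min_const_eq {ι : Type*} {q : ι → ℝ} (hq : Summable q) {θ : ℝ} {H : Finset ι}
    (hH : ∀ i, i ∈ H ↔ θ < q i) :
    ∑' i, min (q i) θ = #H * θ + (∑' i, q i - ∑ i ∈ H, q i) := by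
  classical
  have hmin : ∀ i, min (q i) θ = q i - if i ∈ H then q i - θ else 0 := fun i => by
    by_cases hi : i ∈ H
    · simp [hi, ((hH i).1 hi).le]
    · simp [hi, not_lt.1 ((hH i).not.1 hi)]
  have hfin : HasSum (fun i => if i ∈ H then q i - θ else 0) (∑ i ∈ H, (q i - θ)) := by
    simpa [sum_ite_mem] using hasSum_sum_of_ne_finset_zero (s := H)
      (f := fun i => if i ∈ H then q i - θ else 0) (fun i hi => if_neg hi)
  rw [tsum_congr hmin, hq.tsum_sub hfin.summable, hfin.tsum_eq, sum_sub_distrib, sum_const,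
    nsmul_eq_mul]
  ring

structure IsTruncation (p : ℕ → ℝ) (c : ℝ) (n : ℕ) (Q : ℕ → ℝ) : Prop where
  nonneg : ∀ i, 0 ≤ Q i
  le : ∀ i, Q i ≤ p i
  eq_of_succ_lt : ∀ i, i + 1 < n → Q i = p i
  eq_zero_of_le : ∀ i, n ≤ i → Q i = 0
  sum_range_eq : ∑ i ∈ range n, Q i = c

theorem isTruncation_of_eq_ite {p Q : ℕ → ℝ} {c : ℝ} {n : ℕ} (hp : ∀ i, 0 ≤ p i) (hc : 0 < c)
    (hn : c ≤ ∑ i ∈ range n, p i) (hmin : ∀ m < n, ∑ i ∈ range m, p i < c)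
    (hQ : ∀ i, Q i = if i + 1 < n then p i
      else if i + 1 = n then c - ∑ j ∈ range (n - 1), p j else 0) :
    IsTruncation p c n Q := by
  obtain ⟨m, rfl⟩ : ∃ m, n = m + 1 :=
    Nat.exists_eq_add_one.2 (Nat.pos_of_ne_zero (by rintro rfl; simp at hn; linarith))
  have hlast : Q m = c - ∑ j ∈ range m, p j := by simp [hQ]
  have hbelow : ∀ i < m, Q i = p i := fun i hi => by simp [hQ, hi]
  have habove : ∀ i, m + 1 ≤ i → Q i = 0 := fun i hi => by
    rw [hQ, if_neg (by omega), if_neg (by omega)]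
  have hgap : ∑ j ∈ range m, p j < c := hmin m m.lt_succ_self
  rw [sum_range_succ] at hn
  refine ⟨fun i => ?_, fun i => ?_, fun i hi => hbelow i (by omega), habove, ?_⟩
  · rcases lt_trichotomy i m with hi | rfl | hi
    exacts [hbelow i hi ▸ hp i, by linarith, (habove i hi).symm ▸ le_rfl]
  · rcases lt_trichotomy i m with hi | rfl | hi
    exacts [(hbelow i hi).le, by linarith, (habove i hi).symm ▸ hp i]
  · rw [sum_range_succ, hlast, sum_congr rfl fun i hi => hbelow i (mem_range.1 hi)]
    ring

namespace IsTruncation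

variable {p Q : ℕ → ℝ} {c : ℝ} {n : ℕ}

theorem hasSum_comp (hQ : IsTruncation p c n Q) {f : ℝ → ℝ} (hf : f 0 = 0) :
    HasSum (fun i => f (Q i)) (∑ i ∈ range n, f (Q i)) :=
  hasSum_sum_of_ne_finset_zero fun i hi => by rw [hQ.eq_zero_of_le i (by simpa using hi), hf]

theorem sum_range_rpow_pos (hQ : IsTruncation p c n Q) (hc : 0 < c) (α : ℝ) :
    0 < ∑ i ∈ range n, Q i ^ α := by
  obtain ⟨i, hi, hQi⟩ := (sum_pos_iff_of_nonneg fun i _ => hQ.nonneg i).1 (hQ.sum_range_eq ▸ hc)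
  exact sum_pos' (fun i _ => Real.rpow_nonneg (hQ.nonneg i) α) ⟨i, hi, Real.rpow_pos_of_pos hQi α⟩

theorem sum_range_min_le (hQ : IsTruncation p c n Q) {θ : ℝ} (hθ : 0 ≤ θ) (k : ℕ) :
    ∑ i ∈ range n, min (Q i) θ ≤ k * θ + (c - min c (∑ i ∈ range k, p i)) := by
  rcases lt_or_ge k n with hk | hk
  · have hpQ : ∑ i ∈ range k, Q i = ∑ i ∈ range k, p i :=
      sum_congr rfl fun i hi => hQ.eq_of_succ_lt i (by simp at hi; omega)
    calc ∑ i ∈ range n, min (Q i) θ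
        = ∑ i ∈ range k, min (Q i) θ + ∑ i ∈ Ico k n, min (Q i) θ :=
          (sum_range_add_sum_Ico _ hk.le).symm
      _ ≤ ∑ i ∈ range k, θ + ∑ i ∈ Ico k n, Q i :=
          add_le_add (sum_le_sum fun _ _ => min_le_right _ _)
            (sum_le_sum fun _ _ => min_le_left _ _)
      _ = k * θ + (c - ∑ i ∈ range k, p i) := by
          rw [← hQ.sum_range_eq, ← sum_range_add_sum_Ico _ hk.le, hpQ]; simp
      _ ≤ k * θ + (c - min c (∑ i ∈ range k, p i)) := by
          linarith [min_le_right c (∑ i ∈ range k, p i)]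
  · calc ∑ i ∈ range n, min (Q i) θ ≤ ∑ i ∈ range n, θ := sum_le_sum fun _ _ => min_le_right _ _
      _ = n * θ := by simp
      _ ≤ k * θ := by gcongr
      _ ≤ k * θ + (c - min c (∑ i ∈ range k, p i)) := by
          linarith [min_le_left c (∑ i ∈ range k, p i)]

theorem sum_range_min_le_tsum_min (hQ : IsTruncation p c n Q) (hp : Antitone p) {q : ℕ → ℝ}
    (hq0 : ∀ i, 0 ≤ q i) (hqp : ∀ i, q i ≤ p i) (hq : Summable q) (hc : c ≤ ∑' i, q i)
    {θ : ℝ} (hθ : 0 < θ) :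
    ∑ i ∈ range n, min (Q i) θ ≤ ∑' i, min (q i) θ := by
  have hfin : {i | θ < q i}.Finite :=
    (Filter.eventually_cofinite.1 (hq.tendsto_cofinite_zero.eventually (gt_mem_nhds hθ))).subset
      fun i hi => not_lt.2 (le_of_lt hi)
  set H := hfin.toFinset
  have hH : ∀ i, i ∈ H ↔ θ < q i := fun i => hfin.mem_toFinset
  have hHq : ∑ i ∈ H, q i ≤ ∑ i ∈ range #H, p i :=
    (sum_le_sum fun i _ => hqp i).trans (sum_le_sum_range_card_of_antitone hp H)
  have hHS : ∑ i ∈ H, q i ≤ ∑' i, q i := hq.sum_le_tsum H fun i _ => hq0 i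
  rw [tsum_min_const_eq hq hH]
  refine (hQ.sum_range_min_le hθ.le #H).trans ?_
  rcases min_cases c (∑ i ∈ range #H, p i) with ⟨h, -⟩ | ⟨h, -⟩ <;> rw [h] <;> linarith

end IsTruncation

theorem smooth_renyi_entropy_eq_general (X : Type) (e : ℕ ≃ X)
    (P : X → ℝ) (hP0 : ∀ x, 0 ≤ P x) (hPsum : Summable P)
    (hord : ∀ i, P (e (i + 1)) ≤ P (e i))
    (α : ℝ) (hα : α ∈ Set.Ioo (0:ℝ) 1) (ε : ℝ) (hε : ε ∈ Set.Ico (0:ℝ) 1)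
    (istar : ℕ)
    (histar : 1 - ε ≤ ∑ i ∈ Finset.range istar, P (e i))
    (hmin : ∀ m, m < istar → ∑ i ∈ Finset.range m, P (e i) < 1 - ε)
    (Qstar : ℕ → ℝ)
    (hQstar : ∀ i, Qstar i =
      if i + 1 < istar then P (e i)
      else if i + 1 = istar then 1 - ε - ∑ j ∈ Finset.range (istar - 1), P (e j)
      else 0) :
    sInf { h : ℝ | ∃ Q : X → ℝ, (∀ x, 0 ≤ Q x ∧ Q x ≤ P x) ∧
        (1 - ε ≤ ∑' x, Q x) ∧ Summable (fun x => Q x ^ α) ∧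
        h = (1 / (1 - α)) * Real.log (∑' x, Q x ^ α) } =
      (1 / (1 - α)) * Real.log (∑ i ∈ Finset.range istar, Qstar i ^ α) := by
  have hc : 0 < 1 - ε := sub_pos.2 hε.2
  have hQ : IsTruncation (fun i => P (e i)) (1 - ε) istar Qstar :=
    isTruncation_of_eq_ite (fun i => hP0 (e i)) hc histar hmin hQstar
  have hQX {f : ℝ → ℝ} (hf : f 0 = 0) :
      HasSum (fun x => f (Qstar (e.symm x))) (∑ i ∈ range istar, f (Qstar i)) :=
    (e.symm.hasSum_iff (f := fun i => f (Qstar i))).2 (hQ.hasSum_comp hf)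
  have hQXα := hQX (f := fun t => t ^ α) (Real.zero_rpow hα.1.ne')
  have hQXid := hQX (f := fun t => t) rfl
  refine IsLeast.csInf_eq ⟨⟨fun x => Qstar (e.symm x), fun x => ⟨hQ.nonneg _, ?_⟩, ?_,
    hQXα.summable, by rw [hQXα.tsum_eq]⟩, ?_⟩
  · simpa using hQ.le (e.symm x)
  · rw [hQXid.tsum_eq, hQ.sum_range_eq]
  rintro _ ⟨Q, hQP, hmass, hQα, rfl⟩
  have hQsum : Summable Q := hPsum.of_nonneg_of_le (fun x => (hQP x).1) fun x => (hQP x).2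
  refine mul_le_mul_of_nonneg_left (Real.log_le_log (hQ.sum_range_rpow_pos hc α) ?_)
    (one_div_pos.2 (sub_pos.2 hα.2)).le
  rw [← hQXα.tsum_eq]
  have : Countable X := Countable.of_equiv ℕ e
  refine tsum_rpow_le_of_forall_tsum_min_le hα (fun x => hQ.nonneg _) (fun x => (hQP x).1)
    hQXid.summable hQsum hQXα.summable hQα fun θ hθ => ?_
  rw [(hQX (f := fun t => min t θ) (min_eq_left hθ.le)).tsum_eq,
    ← e.tsum_eq fun x => min (Q x) θ]
  exact hQ.sum_range_min_le_tsum_min (antitone_nat_of_succ_le hord) (fun i => (hQP _).1)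
    (fun i => (hQP _).2) (e.summable_iff.2 hQsum) (by rwa [e.tsum_eq Q]) hθ

/-- The ε-smooth Rényi entropy of order `α ∈ (0,1)` of a discrete distribution is
attained by truncating `P` to its `i*` most probable values.  The defining infimum
is restricted to `Q` with summable α-power (non-summable `Q` have infinite value and
never attain the infimum). -/
theorem smooth_renyi_entropy_eq (X : Type) (e : ℕ ≃ X)
    (P : X → ℝ) (hP0 : ∀ x, 0 ≤ P x) (hPsum : Summable P) (hP1 : ∑' x, P x = 1)
    (hord : ∀ i, P (e (i + 1)) ≤ P (e i))
    (α : ℝ) (hα : α ∈ Set.Ioo (0:ℝ) 1) (ε : ℝ) (hε : ε ∈ Set.Ico (0:ℝ) 1)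
    (istar : ℕ)
    (histar : 1 - ε ≤ ∑ i ∈ Finset.range istar, P (e i))
    (hmin : ∀ m, m < istar → ∑ i ∈ Finset.range m, P (e i) < 1 - ε)
    (Qstar : ℕ → ℝ)
    (hQstar : ∀ i, Qstar i =
      if i + 1 < istar then P (e i)
      else if i + 1 = istar then 1 - ε - ∑ j ∈ Finset.range (istar - 1), P (e j)
      else 0) :
    sInf { h : ℝ | ∃ Q : X → ℝ, (∀ x, 0 ≤ Q x ∧ Q x ≤ P x) ∧
        (1 - ε ≤ ∑' x, Q x) ∧ Summable (fun x => Q x ^ α) ∧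
        h = (1 / (1 - α)) * Real.log (∑' x, Q x ^ α) } =
      (1 / (1 - α)) * Real.log (∑ i ∈ Finset.range istar, Qstar i ^ α) :=
  smooth_renyi_entropy_eq_general X e P hP0 hPsum hord α hα ε hε istar histar hmin Qstar hQstar
end

section
/- Fix ρ > 0 and ε ∈ [0,1). Let X take values in 𝒳 = {1,...,K} and Y in a countable set 𝒴, with joint law P_{XY}. For any guessing strategy G = ((σ_y, π_y))_{y∈𝒴} (σ_y a permutation of 𝒳, π_y(i) ∈ [0,1] stopping probabilities, λ_y(i) = ∏_{j=1}^i (1−π_y(j))) whose error probability p_e = 1 − ∑_{x,y} λ_y(σ_y(x)) P_{XY}(x,y) satisfies p_e ≤ ε, the expected cost C̄_ρ = ∑_{x,y} λ_y(σ_y(x)) P_{XY}(x,y) σ_y(x)^ρ satisfies C̄_ρ ≥ (1 + log K)^{−ρ} · exp{ ρ · H_{1/(1+ρ)}^ε(X|Y) }. -/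
/-- Conditional ε-smooth Rényi entropy, finite `𝒳`, countable `𝒴`. -/
noncomputable def condSmoothRenyi {X Y : Type} [Fintype X] [Countable Y]
    (P : X → Y → ℝ) (α ε : ℝ) : ℝ :=
  sInf { h : ℝ | ∃ Q : X → Y → ℝ, (∀ x y, 0 ≤ Q x y ∧ Q x y ≤ P x y) ∧
    (1 - ε ≤ ∑' y, ∑ x, Q x y) ∧
    Summable (fun y => (∑ x, Q x y ^ α) ^ (1 / α)) ∧
    h = (α / (1 - α)) * Real.log (∑' y, (∑ x, Q x y ^ α) ^ (1 / α)) }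

/-- `λ_y(i) = ∏_{j ≤ i} (1 - π_y(j))`: probability of not having given up before
(and including) the `i`-th guess. -/
noncomputable def lamG {K : ℕ} (π : Fin K → ℝ) (i : Fin K) : ℝ :=
  ∏ j ∈ Finset.univ.filter (· ≤ i), (1 - π j)

/-!
Giving up with probabilities `π` turns `P` into the sub-probability `Q x y = λ_y(σ_y x) P x y`,
whose mass is the success probability `1 - p_e ≥ 1 - ε`; so `Q` is admissible in the infimum
defining `H^ε_α(X|Y)`, and it suffices to bound the unsmoothed Rényi sum of `Q` by the cost.
For each `y` this is Arikan's Hölder argument: with `c x = σ_y x + 1` and `α = 1/(1+ρ)`,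
`(∑ₓ Q^α)^{1+ρ} ≤ (∑ₓ 1/c x)^ρ ∑ₓ Q c^ρ`, and `∑ₓ 1/c x` is the harmonic number `H_K ≤ 1 + log K`.
-/

open Finset

section

open Real

lemma Real.rpow_sum_le_sum_rpow {ι : Type*} (s : Finset ι) {f : ι → ℝ}
    (hf : ∀ i ∈ s, 0 ≤ f i) {p : ℝ} (hp : 0 < p) (hp1 : p ≤ 1) :
    (∑ i ∈ s, f i) ^ p ≤ ∑ i ∈ s, f i ^ p := by
  induction s using Finset.cons_induction with
  | empty => simp [Real.zero_rpow hp.ne']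
  | cons a s ha ih =>
    rw [sum_cons, sum_cons]
    have hfs : ∀ i ∈ s, 0 ≤ f i := fun i hi => hf i (mem_cons_of_mem hi)
    calc (f a + ∑ i ∈ s, f i) ^ p ≤ f a ^ p + (∑ i ∈ s, f i) ^ p :=
          rpow_add_le_add_rpow (hf a (mem_cons_self a s)) (sum_nonneg hfs) hp.le hp1
      _ ≤ f a ^ p + ∑ i ∈ s, f i ^ p := by gcongr; exact ih hfs

lemma Real.sum_le_rpow_sum_rpow {ι : Type*} (s : Finset ι) {f : ι → ℝ}
    (hf : ∀ i ∈ s, 0 ≤ f i) {p : ℝ} (hp : 0 < p) (hp1 : p ≤ 1) :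
    ∑ i ∈ s, f i ≤ (∑ i ∈ s, f i ^ p) ^ (1 / p) := by
  rw [one_div, le_rpow_inv_iff_of_pos (sum_nonneg hf)
    (sum_nonneg fun i hi => rpow_nonneg (hf i hi) p) hp]
  exact rpow_sum_le_sum_rpow s hf hp hp1

/-- Hölder's inequality with exponents `1 + ρ` and `(1 + ρ) / ρ`, applied to
`q ^ (1/(1+ρ)) = (q c^ρ)^(1/(1+ρ)) · c^(-ρ/(1+ρ))`. -/
lemma Real.rpow_sum_rpow_le_mul_sum_mul_rpow {ι : Type*} (s : Finset ι) {ρ : ℝ} (hρ : 0 < ρ)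
    {q c : ι → ℝ} (hq : ∀ i ∈ s, 0 ≤ q i) (hc : ∀ i ∈ s, 0 < c i) :
    (∑ i ∈ s, q i ^ (1 / (1 + ρ))) ^ (1 + ρ) ≤
      (∑ i ∈ s, (c i)⁻¹) ^ ρ * ∑ i ∈ s, q i * c i ^ ρ := by
  have h1ρ : 0 < 1 + ρ := by linarith
  have hpq : HolderConjugate (1 + ρ) ((1 + ρ) / ρ) := by
    rw [holderConjugate_iff_eq_conjExponent (by linarith), add_sub_cancel_left]
  have hqc : ∀ i ∈ s, 0 ≤ q i * c i ^ ρ := fun i hi =>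
    mul_nonneg (hq i hi) (rpow_nonneg (hc i hi).le ρ)
  have holder := inner_le_Lp_mul_Lq_of_nonneg s hpq
    (fun i hi => rpow_nonneg (hqc i hi) (1 / (1 + ρ)))
    (fun i hi => rpow_nonneg (hc i hi).le (-(ρ / (1 + ρ))))
  have split : ∀ i ∈ s, (q i * c i ^ ρ) ^ (1 / (1 + ρ)) * c i ^ (-(ρ / (1 + ρ)))
      = q i ^ (1 / (1 + ρ)) := fun i hi => by
    rw [mul_rpow (hq i hi) (rpow_nonneg (hc i hi).le ρ), ← rpow_mul (hc i hi).le, mul_assoc,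
      ← rpow_add (hc i hi), mul_one_div, add_neg_cancel, rpow_zero, mul_one]
  have first : ∀ i ∈ s, ((q i * c i ^ ρ) ^ (1 / (1 + ρ))) ^ (1 + ρ) = q i * c i ^ ρ :=
    fun i hi => by rw [← rpow_mul (hqc i hi), one_div_mul_cancel h1ρ.ne', rpow_one]
  have second : ∀ i ∈ s, (c i ^ (-(ρ / (1 + ρ)))) ^ ((1 + ρ) / ρ) = (c i)⁻¹ := fun i hi => by
    rw [← rpow_mul (hc i hi).le, neg_mul, div_mul_div_cancel₀' .., div_self h1ρ.ne',
      rpow_neg_one]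
    exact hρ.ne'
  rw [sum_congr rfl split, sum_congr rfl first, sum_congr rfl second, one_div_div] at holder
  have hA : 0 ≤ ∑ i ∈ s, q i * c i ^ ρ := sum_nonneg hqc
  have hB : 0 ≤ ∑ i ∈ s, (c i)⁻¹ := sum_nonneg fun i hi => (inv_pos.2 (hc i hi)).le
  calc (∑ i ∈ s, q i ^ (1 / (1 + ρ))) ^ (1 + ρ)
      ≤ ((∑ i ∈ s, q i * c i ^ ρ) ^ (1 / (1 + ρ)) *
          (∑ i ∈ s, (c i)⁻¹) ^ (ρ / (1 + ρ))) ^ (1 + ρ) := by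
        gcongr
        exact sum_nonneg fun i hi => rpow_nonneg (hq i hi) _
    _ = (∑ i ∈ s, (c i)⁻¹) ^ ρ * ∑ i ∈ s, q i * c i ^ ρ := by
        rw [mul_rpow (rpow_nonneg hA _) (rpow_nonneg hB _), ← rpow_mul hA, ← rpow_mul hB,
          one_div_mul_cancel h1ρ.ne', div_mul_cancel₀ _ h1ρ.ne', rpow_one, mul_comm]

end

section SmoothRenyi

variable {X Y : Type} [Fintype X]

lemma tsum_sum_le_tsum_rpow_sum_rpow {Q : X → Y → ℝ} (hQ : ∀ x y, 0 ≤ Q x y)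
    (hQs : Summable fun y => ∑ x, Q x y) {α : ℝ} (hα0 : 0 < α) (hα1 : α ≤ 1)
    (hF : Summable fun y => (∑ x, Q x y ^ α) ^ (1 / α)) :
    ∑' y, ∑ x, Q x y ≤ ∑' y, (∑ x, Q x y ^ α) ^ (1 / α) :=
  hQs.tsum_le_tsum (fun y => Real.sum_le_rpow_sum_rpow _ (fun x _ => hQ x y) hα0 hα1) hF

lemma one_sub_le_tsum_rpow_sum_rpow_of_le {P Q : X → Y → ℝ} {α ε : ℝ}
    (hPs : Summable fun y => ∑ x, P x y) (hQ : ∀ x y, 0 ≤ Q x y ∧ Q x y ≤ P x y)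
    (hQε : 1 - ε ≤ ∑' y, ∑ x, Q x y) (hα0 : 0 < α) (hα1 : α ≤ 1)
    (hF : Summable fun y => (∑ x, Q x y ^ α) ^ (1 / α)) :
    1 - ε ≤ ∑' y, (∑ x, Q x y ^ α) ^ (1 / α) := by
  have hQs : Summable fun y => ∑ x, Q x y :=
    hPs.of_nonneg_of_le (fun y => sum_nonneg fun x _ => (hQ x y).1)
      (fun y => sum_le_sum fun x _ => (hQ x y).2)
  exact hQε.trans (tsum_sum_le_tsum_rpow_sum_rpow (fun x y => (hQ x y).1) hQs hα0 hα1 hF)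

lemma condSmoothRenyi_le [Countable Y] {P Q : X → Y → ℝ} {α ε : ℝ} (hα0 : 0 < α) (hα1 : α < 1)
    (hε : ε < 1) (hPs : Summable fun y => ∑ x, P x y) (hQ : ∀ x y, 0 ≤ Q x y ∧ Q x y ≤ P x y)
    (hQε : 1 - ε ≤ ∑' y, ∑ x, Q x y) (hF : Summable fun y => (∑ x, Q x y ^ α) ^ (1 / α)) :
    condSmoothRenyi P α ε ≤ α / (1 - α) * Real.log (∑' y, (∑ x, Q x y ^ α) ^ (1 / α)) := by
  have hc : 0 ≤ α / (1 - α) := div_nonneg hα0.le (sub_nonneg.2 hα1.le)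
  refine csInf_le ⟨α / (1 - α) * Real.log (1 - ε), ?_⟩ ⟨Q, hQ, hQε, hF, rfl⟩
  rintro h ⟨Q', hQ', hQ'ε, hF', rfl⟩
  gcongr
  exact one_sub_le_tsum_rpow_sum_rpow_of_le hPs hQ' hQ'ε hα0 hα1.le hF'

lemma exp_mul_condSmoothRenyi_le [Countable Y] {P Q : X → Y → ℝ} {ρ ε : ℝ} (hρ : 0 < ρ) (hε : ε < 1)
    (hPs : Summable fun y => ∑ x, P x y) (hQ : ∀ x y, 0 ≤ Q x y ∧ Q x y ≤ P x y)
    (hQε : 1 - ε ≤ ∑' y, ∑ x, Q x y)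
    (hF : Summable fun y => (∑ x, Q x y ^ (1 / (1 + ρ))) ^ (1 + ρ)) :
    Real.exp (ρ * condSmoothRenyi P (1 / (1 + ρ)) ε) ≤
      ∑' y, (∑ x, Q x y ^ (1 / (1 + ρ))) ^ (1 + ρ) := by
  have hα0 : 0 < 1 / (1 + ρ) := by positivity
  have hα1 : 1 / (1 + ρ) < 1 := by rw [div_lt_one (by positivity)]; linarith
  replace hF : Summable fun y => (∑ x, Q x y ^ (1 / (1 + ρ))) ^ (1 / (1 / (1 + ρ))) := by
    rwa [one_div_one_div]
  have hS := (sub_pos.2 hε).trans_le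
    (one_sub_le_tsum_rpow_sum_rpow_of_le hPs hQ hQε hα0 hα1.le hF)
  have hH := condSmoothRenyi_le hα0 hα1 hε hPs hQ hQε hF
  rw [one_div_one_div] at hS hH
  have hc : 1 / (1 + ρ) / (1 - 1 / (1 + ρ)) = ρ⁻¹ := by
    rw [one_sub_div (by positivity), add_sub_cancel_left, div_div_div_cancel_right₀ (by positivity),
      one_div]
  rw [hc] at hH
  calc Real.exp (ρ * condSmoothRenyi P (1 / (1 + ρ)) ε)
      ≤ Real.exp (ρ * (ρ⁻¹ * Real.log _)) := by gcongr
    _ = _ := by rw [mul_inv_cancel_left₀ hρ.ne', Real.exp_log hS]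

end SmoothRenyi

section Guessing

variable {K : ℕ}

lemma lamG_nonneg {π : Fin K → ℝ} (hπ : ∀ i, 0 ≤ π i ∧ π i ≤ 1) (i : Fin K) :
    0 ≤ lamG π i :=
  prod_nonneg fun j _ => sub_nonneg.2 (hπ j).2

lemma lamG_le_one {π : Fin K → ℝ} (hπ : ∀ i, 0 ≤ π i ∧ π i ≤ 1) (i : Fin K) :
    lamG π i ≤ 1 :=
  prod_le_one (fun j _ => sub_nonneg.2 (hπ j).2) fun j _ => sub_le_self _ (hπ j).1

lemma sum_inv_perm_add_one_le_one_add_log (σ : Equiv.Perm (Fin K)) :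
    ∑ x, (((σ x : ℕ) : ℝ) + 1)⁻¹ ≤ 1 + Real.log K := by
  rw [Equiv.sum_comp σ fun i => (((i : ℕ) : ℝ) + 1)⁻¹,
    Fin.sum_univ_eq_sum_range (fun i => ((i : ℝ) + 1)⁻¹)]
  simpa [harmonic] using harmonic_le_one_add_log K

lemma rpow_sum_rpow_le_guessing_cost {ρ : ℝ} (hρ : 0 < ρ) {q : Fin K → ℝ} (hq : ∀ x, 0 ≤ q x)
    (σ : Equiv.Perm (Fin K)) :
    (∑ x, q x ^ (1 / (1 + ρ))) ^ (1 + ρ) ≤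
      (1 + Real.log K) ^ ρ * ∑ x, q x * (((σ x : ℕ) : ℝ) + 1) ^ ρ := by
  refine (Real.rpow_sum_rpow_le_mul_sum_mul_rpow univ hρ (c := fun x => ((σ x : ℕ) : ℝ) + 1)
    (fun x _ => hq x) fun x _ => by positivity).trans ?_
  gcongr
  · exact sum_nonneg fun x _ => mul_nonneg (hq x) (by positivity)
  · exact sum_inv_perm_add_one_le_one_add_log σ

lemma sum_mul_rpow_le_rpow_mul_sum {ρ : ℝ} (hρ : 0 ≤ ρ) {q p : Fin K → ℝ}
    (hq : ∀ x, 0 ≤ q x ∧ q x ≤ p x) (τ : Fin K → Fin K) :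
    ∑ x, q x * (((τ x : ℕ) : ℝ) + 1) ^ ρ ≤ (K : ℝ) ^ ρ * ∑ x, p x := by
  rw [mul_sum]
  refine sum_le_sum fun x _ => ?_
  rw [mul_comm ((K : ℝ) ^ ρ)]
  exact mul_le_mul (hq x).2 (Real.rpow_le_rpow (by positivity) (by exact_mod_cast (τ x).isLt) hρ)
    (by positivity) ((hq x).1.trans (hq x).2)

end Guessing

theorem guessing_converse_general {Y : Type} [Countable Y] (K : ℕ)
    (P : Fin K → Y → ℝ) (hP0 : ∀ x y, 0 ≤ P x y) (hP1 : ∑' y, ∑ x, P x y = 1)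
    (ρ : ℝ) (hρ : 0 < ρ) (ε : ℝ) (hε : ε ∈ Set.Ico (0:ℝ) 1)
    (σ : Y → Equiv.Perm (Fin K)) (π : Y → Fin K → ℝ)
    (hπ : ∀ y i, 0 ≤ π y i ∧ π y i ≤ 1)
    (hpe : 1 - ∑' y, ∑ x, lamG (π y) (σ y x) * P x y ≤ ε) :
    (1 + Real.log K) ^ (-ρ) * Real.exp (ρ * condSmoothRenyi P (1 / (1 + ρ)) ε) ≤
      ∑' y, ∑ x, lamG (π y) (σ y x) * P x y * (((σ y x : ℕ) : ℝ) + 1) ^ ρ := by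
  set Q : Fin K → Y → ℝ := fun x y => lamG (π y) (σ y x) * P x y
  have hQ : ∀ x y, 0 ≤ Q x y ∧ Q x y ≤ P x y := fun x y =>
    ⟨mul_nonneg (lamG_nonneg (hπ y) _) (hP0 x y),
      mul_le_of_le_one_left (hP0 x y) (lamG_le_one (hπ y) _)⟩
  have hPs : Summable fun y => ∑ x, P x y := by
    by_contra h; simp [tsum_eq_zero_of_not_summable h] at hP1
  have hcost : Summable fun y => ∑ x, Q x y * (((σ y x : ℕ) : ℝ) + 1) ^ ρ :=
    (hPs.mul_left _).of_nonneg_of_le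
      (fun y => sum_nonneg fun x _ => mul_nonneg (hQ x y).1 (by positivity))
      fun y => sum_mul_rpow_le_rpow_mul_sum hρ.le (fun x => hQ x y) (σ y)
  have hB : 0 < 1 + Real.log K := by linarith [Real.log_natCast_nonneg K]
  have hF := fun y => rpow_sum_rpow_le_guessing_cost hρ (fun x => (hQ x y).1) (σ y)
  have hFs := (hcost.mul_left _).of_nonneg_of_le (fun y =>
    Real.rpow_nonneg (sum_nonneg fun x _ => Real.rpow_nonneg (hQ x y).1 _) _) hF
  calc (1 + Real.log K) ^ (-ρ) * Real.exp (ρ * condSmoothRenyi P (1 / (1 + ρ)) ε)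
      ≤ (1 + Real.log K) ^ (-ρ) * ∑' y, (∑ x, Q x y ^ (1 / (1 + ρ))) ^ (1 + ρ) := by
        gcongr
        exact exp_mul_condSmoothRenyi_le hρ hε.2 hPs hQ (by linarith) hFs
    _ ≤ (1 + Real.log K) ^ (-ρ) *
          ((1 + Real.log K) ^ ρ * ∑' y, ∑ x, Q x y * (((σ y x : ℕ) : ℝ) + 1) ^ ρ) := by
        refine mul_le_mul_of_nonneg_left ?_ (by positivity)
        rw [← tsum_mul_left]
        exact hFs.tsum_le_tsum hF (hcost.mul_left _)
    _ = _ := by rw [← mul_assoc, ← Real.rpow_add hB, neg_add_cancel, Real.rpow_zero, one_mul]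

/-- Converse for guessing allowing errors: any strategy with error probability at
most `ε` has expected cost at least `(1 + log K)^{-ρ} exp(ρ H_{1/(1+ρ)}^ε(X|Y))`. -/
theorem guessing_converse {Y : Type} [Countable Y] (K : ℕ) (hK : 0 < K)
    (P : Fin K → Y → ℝ) (hP0 : ∀ x y, 0 ≤ P x y) (hP1 : ∑' y, ∑ x, P x y = 1)
    (ρ : ℝ) (hρ : 0 < ρ) (ε : ℝ) (hε : ε ∈ Set.Ico (0:ℝ) 1)
    (σ : Y → Equiv.Perm (Fin K)) (π : Y → Fin K → ℝ)
    (hπ : ∀ y i, 0 ≤ π y i ∧ π y i ≤ 1)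
    (hpe : 1 - ∑' y, ∑ x, lamG (π y) (σ y x) * P x y ≤ ε) :
    (1 + Real.log K) ^ (-ρ) * Real.exp (ρ * condSmoothRenyi P (1 / (1 + ρ)) ε) ≤
      ∑' y, ∑ x, lamG (π y) (σ y x) * P x y * (((σ y x : ℕ) : ℝ) + 1) ^ ρ :=
  guessing_converse_general K P hP0 hP1 ρ hρ ε hε σ π hπ hpe
end

section
/- Let ρ > 0 and let Q be a subprobability distribution on a countable set 𝒜 with Q(x) > 0 for x ∈ 𝒜. Among all length functions ℓ : 𝒜 → ℝ_{≥0} satisfying the Kraft-type constraint ∑_{x ∈ 𝒜} exp(−ℓ(x)) ≤ 1, the quantity ∑_{x ∈ 𝒜} Q(x) exp(ρ ℓ(x)) is minimized by ℓ*(x) = −log( Q(x)^{1/(1+ρ)} / ∑_{x'} Q(x')^{1/(1+ρ)} ), and the minimum value equals ( ∑_{x ∈ 𝒜} Q(x)^{1/(1+ρ)} )^{1+ρ}. -/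
/-!
Write `α = 1/(1+ρ)`. For any lengths `ℓ`, the weight `Q x ^ α` factors as
`(Q x * exp (ρ * ℓ x)) ^ α * (exp (-ℓ x)) ^ (1 - α)`, so Hölder's inequality with exponents
`1/α` and `1/(1-α)` together with the Kraft constraint gives
`∑ Q ^ α ≤ (∑ Q * exp (ρ * ℓ)) ^ α`. Equality in Hölder holds when `exp (-ℓ)` is proportional
to `Q ^ α`, which is exactly the choice `ℓ*`.
-/

open Real

theorem tsum_rpow_mul_rpow_le {ι : Type*} {u v : ι → ℝ} {a b : ℝ} (ha : 0 < a) (hb : 0 < b)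
    (hab : a + b = 1) (hu : ∀ i, 0 ≤ u i) (hv : ∀ i, 0 ≤ v i) (hu_sum : Summable u)
    (hv_sum : Summable v) :
    ∑' i, u i ^ a * v i ^ b ≤ (∑' i, u i) ^ a * (∑' i, v i) ^ b := by
  have hpow_inv {c : ℝ} (hc : 0 < c) {w : ι → ℝ} (hw : ∀ i, 0 ≤ w i) (i : ι) :
      (w i ^ c) ^ c⁻¹ = w i := by
    rw [← rpow_mul (hw i), mul_inv_cancel₀ hc.ne', rpow_one]
  have holder := inner_le_Lp_mul_Lq_tsum_of_nonneg (Real.HolderConjugate.inv_inv ha hb hab)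
    (fun i => rpow_nonneg (hu i) a) (fun i => rpow_nonneg (hv i) b)
    (by simpa only [hpow_inv ha hu] using hu_sum) (by simpa only [hpow_inv hb hv] using hv_sum)
  simpa only [hpow_inv ha hu, hpow_inv hb hv, one_div, inv_inv] using holder

theorem rpow_tsum_rpow_le_tsum_mul_exp {ι : Type*} {Q l : ι → ℝ} {ρ : ℝ} (hρ : 0 < ρ)
    (hQ : ∀ i, 0 ≤ Q i) (hkraft_sum : Summable fun i => exp (-l i))
    (hkraft : ∑' i, exp (-l i) ≤ 1) (hsum : Summable fun i => Q i * exp (ρ * l i)) :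
    (∑' i, Q i ^ (1 / (1 + ρ))) ^ (1 + ρ) ≤ ∑' i, Q i * exp (ρ * l i) := by
  have h1ρ : 0 < 1 + ρ := by linarith
  set a := 1 / (1 + ρ) with ha
  set b := ρ / (1 + ρ) with hb
  have hab : a + b = 1 := by rw [ha, hb]; field_simp
  have hfactor (i : ι) : Q i ^ a = (Q i * exp (ρ * l i)) ^ a * exp (-l i) ^ b := by
    rw [mul_rpow (hQ i) (exp_pos _).le, ← exp_mul, ← exp_mul, mul_assoc, ← exp_add,
      show ρ * l i * a + -l i * b = 0 by field_simp; ring, exp_zero, mul_one]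
  have hE : 0 ≤ ∑' i, Q i * exp (ρ * l i) :=
    tsum_nonneg fun i => mul_nonneg (hQ i) (exp_pos _).le
  have hS : ∑' i, Q i ^ a ≤ (∑' i, Q i * exp (ρ * l i)) ^ a :=
    calc ∑' i, Q i ^ a
        = ∑' i, (Q i * exp (ρ * l i)) ^ a * exp (-l i) ^ b := tsum_congr hfactor
      _ ≤ (∑' i, Q i * exp (ρ * l i)) ^ a * (∑' i, exp (-l i)) ^ b :=
          tsum_rpow_mul_rpow_le (by positivity) (by positivity) hab
            (fun i => mul_nonneg (hQ i) (exp_pos _).le) (fun i => (exp_pos _).le) hsum hkraft_sum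
      _ ≤ (∑' i, Q i * exp (ρ * l i)) ^ a * 1 := by
          gcongr
          exact rpow_le_one (tsum_nonneg fun i => (exp_pos _).le) hkraft (by positivity)
      _ = _ := mul_one _
  calc (∑' i, Q i ^ a) ^ (1 + ρ)
      ≤ ((∑' i, Q i * exp (ρ * l i)) ^ a) ^ (1 + ρ) :=
        rpow_le_rpow (tsum_nonneg fun i => rpow_nonneg (hQ i) a) hS h1ρ.le
    _ = ∑' i, Q i * exp (ρ * l i) := by
        rw [← rpow_mul hE, one_div_mul_cancel h1ρ.ne', rpow_one]

theorem neg_log_div_tsum_nonneg {ι : Type*} {w : ι → ℝ} (hw : ∀ i, 0 ≤ w i)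
    (hw_sum : Summable w) (x : ι) : 0 ≤ -log (w x / ∑' i, w i) := by
  have hS : 0 ≤ ∑' i, w i := tsum_nonneg hw
  exact neg_nonneg.2 <| log_nonpos (div_nonneg (hw x) hS)
    (div_le_one_of_le₀ (hw_sum.le_tsum x fun i _ => hw i) hS)

theorem tsum_exp_neg_neg_log_div_tsum_le_one {ι : Type*} {w : ι → ℝ} (hw : ∀ i, 0 < w i)
    (hw_sum : Summable w) : ∑' x, exp (-(-log (w x / ∑' i, w i))) ≤ 1 := by
  have hterm (x : ι) : exp (-(-log (w x / ∑' i, w i))) = w x / ∑' i, w i := by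
    rw [neg_neg, exp_log (div_pos (hw x) (hw_sum.tsum_pos (fun i => (hw i).le) x (hw x)))]
  rw [tsum_congr hterm, tsum_div_const]
  exact div_self_le_one _

theorem mul_exp_mul_neg_log_rpow_div {q S ρ : ℝ} (hq : 0 < q) (hS : 0 < S) (h1ρ : 1 + ρ ≠ 0) :
    q * exp (ρ * -log (q ^ (1 / (1 + ρ)) / S)) = q ^ (1 / (1 + ρ)) * S ^ ρ := by
  have hqa : 0 < q ^ (1 / (1 + ρ)) := rpow_pos_of_pos hq _
  have hsplit : q = q ^ (1 / (1 + ρ)) * q ^ (1 / (1 + ρ) * ρ) := by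
    rw [← rpow_add hq, show 1 / (1 + ρ) + 1 / (1 + ρ) * ρ = 1 by field_simp, rpow_one]
  rw [mul_neg, ← log_rpow (div_pos hqa hS), ← log_inv, exp_log (by positivity),
    div_rpow hqa.le hS.le, ← rpow_mul hq.le, inv_div]
  nth_rewrite 1 [hsplit]
  field_simp

theorem tsum_mul_exp_mul_neg_log_rpow_div_tsum {ι : Type*} {Q : ι → ℝ} {ρ : ℝ} (h1ρ : 1 + ρ ≠ 0)
    (hQ : ∀ i, 0 < Q i) (hQpow : Summable fun i => Q i ^ (1 / (1 + ρ))) :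
    ∑' x, Q x * exp (ρ * -log (Q x ^ (1 / (1 + ρ)) / ∑' i, Q i ^ (1 / (1 + ρ)))) =
      (∑' i, Q i ^ (1 / (1 + ρ))) ^ (1 + ρ) := by
  have hS (x : ι) : 0 < ∑' i, Q i ^ (1 / (1 + ρ)) :=
    hQpow.tsum_pos (fun i => (rpow_pos_of_pos (hQ i) _).le) x (rpow_pos_of_pos (hQ x) _)
  rw [tsum_congr fun x => mul_exp_mul_neg_log_rpow_div (hQ x) (hS x) h1ρ, tsum_mul_right,
    rpow_add' (tsum_nonneg fun i => (rpow_pos_of_pos (hQ i) _).le) h1ρ, rpow_one]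

theorem length_optimization_general {A : Type}
    (ρ : ℝ) (hρ : 0 < ρ) (Q : A → ℝ) (hQpos : ∀ x, 0 < Q x)
    (hQpow : Summable (fun x => Q x ^ (1 / (1 + ρ)))) :
    (∀ x, 0 ≤ -Real.log (Q x ^ (1 / (1 + ρ)) / ∑' x', Q x' ^ (1 / (1 + ρ)))) ∧
    (∑' x, Real.exp (-(-Real.log (Q x ^ (1 / (1 + ρ)) / ∑' x', Q x' ^ (1 / (1 + ρ))))) ≤ 1) ∧
    (∑' x, Q x * Real.exp (ρ *
        (-Real.log (Q x ^ (1 / (1 + ρ)) / ∑' x', Q x' ^ (1 / (1 + ρ))))) =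
      (∑' x, Q x ^ (1 / (1 + ρ))) ^ (1 + ρ)) ∧
    (∀ l : A → ℝ, (∀ x, 0 ≤ l x) →
      Summable (fun x => Real.exp (-(l x))) → (∑' x, Real.exp (-(l x))) ≤ 1 →
      Summable (fun x => Q x * Real.exp (ρ * l x)) →
      (∑' x, Q x ^ (1 / (1 + ρ))) ^ (1 + ρ) ≤ ∑' x, Q x * Real.exp (ρ * l x)) := by
  have hQpow_pos (x : A) : 0 < Q x ^ (1 / (1 + ρ)) := rpow_pos_of_pos (hQpos x) _
  exact ⟨neg_log_div_tsum_nonneg (fun x => (hQpow_pos x).le) hQpow,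
    tsum_exp_neg_neg_log_div_tsum_le_one hQpow_pos hQpow,
    tsum_mul_exp_mul_neg_log_rpow_div_tsum (by linarith) hQpos hQpow,
    fun _ _ hkraft_sum hkraft hsum =>
      rpow_tsum_rpow_le_tsum_mul_exp hρ (fun x => (hQpos x).le) hkraft_sum hkraft hsum⟩

/-- Exact solution of the exponential-moment length optimization: among
nonnegative length functions satisfying the Kraft constraint `∑ exp(-ℓ x) ≤ 1`,
the tilted lengths `ℓ*(x) = -log(Q x^{1/(1+ρ)} / S)` (with
`S = ∑ Q x^{1/(1+ρ)}`) are feasible, achieve the value `S^{1+ρ}`, and minimize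
`∑ Q x * exp(ρ ℓ x)`. -/
theorem length_optimization {A : Type} [Countable A]
    (ρ : ℝ) (hρ : 0 < ρ) (Q : A → ℝ) (hQpos : ∀ x, 0 < Q x)
    (hQsum : Summable Q) (hQsub : ∑' x, Q x ≤ 1)
    (hQpow : Summable (fun x => Q x ^ (1 / (1 + ρ)))) :
    (∀ x, 0 ≤ -Real.log (Q x ^ (1 / (1 + ρ)) / ∑' x', Q x' ^ (1 / (1 + ρ)))) ∧
    (∑' x, Real.exp (-(-Real.log (Q x ^ (1 / (1 + ρ)) / ∑' x', Q x' ^ (1 / (1 + ρ))))) ≤ 1) ∧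
    (∑' x, Q x * Real.exp (ρ *
        (-Real.log (Q x ^ (1 / (1 + ρ)) / ∑' x', Q x' ^ (1 / (1 + ρ))))) =
      (∑' x, Q x ^ (1 / (1 + ρ))) ^ (1 + ρ)) ∧
    (∀ l : A → ℝ, (∀ x, 0 ≤ l x) →
      Summable (fun x => Real.exp (-(l x))) → (∑' x, Real.exp (-(l x))) ≤ 1 →
      Summable (fun x => Q x * Real.exp (ρ * l x)) →
      (∑' x, Q x ^ (1 / (1 + ρ))) ^ (1 + ρ) ≤ ∑' x, Q x * Real.exp (ρ * l x)) :=
  length_optimization_general ρ hρ Q hQpos hQpow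
end

section
/- Let ρ > 0 and let Q(·) be a nonincreasing nonnegative sequence Q(1) ≥ Q(2) ≥ ⋯ ≥ Q(N) ≥ 0. Then ∑_{i=1}^N Q(i) · i^ρ ≤ ( ∑_{i=1}^N Q(i)^{1/(1+ρ)} )^{1+ρ}. -/
/-!
Since `Q` is nonincreasing, `Q i ^ α` (with `α = 1/(1+ρ)`) is at most the average of the first
`i + 1` terms `Q j ^ α`, so `(i+1) Q i ^ α ≤ S := ∑ j, Q j ^ α`. Writing
`Q i (i+1)^ρ = Q i ^ α ((i+1) Q i ^ α)^ρ ≤ Q i ^ α S^ρ` and summing over `i` gives `S · S^ρ`.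
-/

open Finset

theorem succ_nsmul_le_sum_range_of_antitoneOn {M : Type*} [AddCommMonoid M] [PartialOrder M]
    [IsOrderedAddMonoid M] {f : ℕ → M} {N i : ℕ} (hf0 : ∀ j, 0 ≤ f j)
    (hf : AntitoneOn f (Set.Iio N)) (hi : i < N) :
    (i + 1) • f i ≤ ∑ j ∈ range N, f j :=
  calc (i + 1) • f i = ∑ _j ∈ range (i + 1), f i := by rw [sum_const, card_range]
    _ ≤ ∑ j ∈ range (i + 1), f j := sum_le_sum fun j hj =>
        hf (lt_of_le_of_lt (Nat.lt_succ_iff.mp (mem_range.mp hj)) hi) hi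
          (Nat.lt_succ_iff.mp (mem_range.mp hj))
    _ ≤ ∑ j ∈ range N, f j :=
        sum_le_sum_of_subset_of_nonneg (range_subset_range.mpr hi) fun j _ _ => hf0 j

theorem Real.mul_rpow_le_rpow_mul_rpow_of_mul_rpow_le {ρ q k S : ℝ} (hρ : 0 ≤ ρ) (hq : 0 ≤ q)
    (hk : 0 ≤ k) (hkS : k * q ^ (1 / (1 + ρ)) ≤ S) :
    q * k ^ ρ ≤ q ^ (1 / (1 + ρ)) * S ^ ρ := by
  set α := 1 / (1 + ρ)
  have hsplit : α + α * ρ = 1 := by simp only [α]; field_simp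
  have hq_eq : q = q ^ α * (q ^ α) ^ ρ := by
    rw [← Real.rpow_mul hq, ← Real.rpow_add' hq (by rw [hsplit]; exact one_ne_zero), hsplit,
      Real.rpow_one]
  calc q * k ^ ρ = q ^ α * (k * q ^ α) ^ ρ := by
        rw [Real.mul_rpow hk (Real.rpow_nonneg hq α)]
        nth_rw 1 [hq_eq]
        ring
    _ ≤ q ^ α * S ^ ρ := by gcongr

/-- Guessing achievability inequality: for a nonincreasing nonnegative sequence `Q`,
`∑ Q(i) i^ρ ≤ (∑ Q(i)^{1/(1+ρ)})^{1+ρ}`. -/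
theorem guessing_moment_bound (ρ : ℝ) (hρ : 0 < ρ) (N : ℕ) (Q : ℕ → ℝ)
    (hQ0 : ∀ i, 0 ≤ Q i) (hmono : ∀ i j, i ≤ j → j < N → Q j ≤ Q i) :
    ∑ i ∈ Finset.range N, Q i * ((i : ℝ) + 1) ^ ρ ≤
      (∑ i ∈ Finset.range N, Q i ^ (1 / (1 + ρ))) ^ (1 + ρ) := by
  set S := ∑ i ∈ range N, Q i ^ (1 / (1 + ρ))
  have hS : 0 ≤ S := sum_nonneg fun i _ => Real.rpow_nonneg (hQ0 i) _
  have hrank : ∀ i ∈ range N, ((i : ℝ) + 1) * Q i ^ (1 / (1 + ρ)) ≤ S := fun i hi => by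
    have := succ_nsmul_le_sum_range_of_antitoneOn
      (fun j => Real.rpow_nonneg (hQ0 j) (1 / (1 + ρ)))
      (fun a _ b hb hab => Real.rpow_le_rpow (hQ0 b) (hmono a b hab hb) (by positivity))
      (mem_range.mp hi)
    rwa [nsmul_eq_mul, Nat.cast_succ] at this
  calc ∑ i ∈ range N, Q i * ((i : ℝ) + 1) ^ ρ
      ≤ ∑ i ∈ range N, Q i ^ (1 / (1 + ρ)) * S ^ ρ := sum_le_sum fun i hi =>
        Real.mul_rpow_le_rpow_mul_rpow_of_mul_rpow_le hρ.le (hQ0 i) (by positivity) (hrank i hi)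
    _ = S ^ (1 + ρ) := by rw [← sum_mul, Real.rpow_add' hS (by positivity), Real.rpow_one]
end
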